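/- The function ψ is strictly increasing with respect to the interior of the cone E: for all x_1, x_2 ∈ ℝ^p, if x_2 − x_1 lies in the interior of E then ψ(x_1) < ψ(x_2). -/

import Mathlib

/-!
Write `σ_S(y) = dist(y, Sᶜ) - dist(y, S)` for the signed distance to `S`, so that
`ψ(z) = σ_E(z - x_k)`. Thickening a set by `ε` raises its signed distance by at least `ε`,
enlarging a set does not lower it, and translations act isometrically. If the ball of radius `ε`
around `b - a` lies in `E`, then, `E` being closed under addition, `E` contains the translate of
the `ε`-thickening of `E` by `b - a`; comparing signed distances gives `ψ(a) + ε ≤ ψ(b)`.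
-/

open Metric Set Pointwise

noncomputable section

namespace Metric

section PseudoMetricSpace

variable {α : Type*} [PseudoMetricSpace α]

def signedInfDist (s : Set α) (x : α) : ℝ := infDist x sᶜ - infDist x s

lemma signedInfDist_mono {s t : Set α} (hst : s ⊆ t) (hs : s.Nonempty) (ht : tᶜ.Nonempty)
    (x : α) : signedInfDist s x ≤ signedInfDist t x := by
  have hcompl := infDist_le_infDist_of_subset (x := x) (compl_subset_compl.2 hst) ht
  have hset := infDist_le_infDist_of_subset (x := x) hst hs
  unfold signedInfDist
  linarith

lemma signedInfDist_vadd {G : Type*} [AddGroup G] [AddAction G α] [IsIsometricVAdd G α]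
    (c : G) (s : Set α) (x : α) : signedInfDist (c +ᵥ s) (c +ᵥ x) = signedInfDist s x := by
  simp only [signedInfDist, infDist, ← vadd_set_compl, infEDist_vadd]

lemma le_infDist_compl_of_ball_subset {s : Set α} {x : α} {r : ℝ} (hs : sᶜ.Nonempty)
    (h : ball x r ⊆ s) : r ≤ infDist x sᶜ :=
  (le_infDist hs).2 fun _ hy => not_lt.1 fun hlt => hy (h (mem_ball'.2 hlt))

end PseudoMetricSpace

section NormedSpace

variable {E : Type*} [SeminormedAddCommGroup E] [NormedSpace ℝ E] {s : Set E} {x : E} {ε : ℝ}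

lemma infDist_thickening_of_notMem (hs : s.Nonempty) (hε : 0 < ε) (hx : x ∉ thickening ε s) :
    infDist x (thickening ε s) = infDist x s - ε := by
  rw [mem_thickening_iff_infEDist_lt, not_lt] at hx
  rw [infDist, infEDist_thickening hε, ENNReal.toReal_sub_of_le hx (infEDist_ne_top hs),
    ENNReal.toReal_ofReal hε.le, infDist]

lemma ball_infDist_compl_add_subset_thickening (hx : x ∈ s) (hε : 0 < ε) :
    ball x (infDist x sᶜ + ε) ⊆ thickening ε s := by
  rcases (infDist_nonneg (x := x) (s := sᶜ)).eq_or_lt with h | h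
  · rw [← h, zero_add]
    exact ball_subset_thickening hx ε
  · rw [add_comm, ← _root_.thickening_ball hε h]
    exact thickening_subset_of_subset ε ball_infDist_compl_subset

lemma signedInfDist_add_le_thickening (hs : s.Nonempty) (hc : (thickening ε s)ᶜ.Nonempty)
    (hε : 0 < ε) (x : E) : signedInfDist s x + ε ≤ signedInfDist (thickening ε s) x := by
  by_cases hxs : x ∈ s
  · have hxT : x ∈ thickening ε s := self_subset_thickening hε s hxs
    have hball :=
      le_infDist_compl_of_ball_subset hc (ball_infDist_compl_add_subset_thickening hxs hε)
    simp only [signedInfDist, infDist_zero_of_mem hxs, infDist_zero_of_mem hxT]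
    linarith
  have hxs' : infDist x sᶜ = 0 := infDist_zero_of_mem hxs
  by_cases hxT : x ∈ thickening ε s
  · -- every point outside the thickening is `ε`-far from `s`, and `infDist · s` is 1-Lipschitz
    have hgap : ε - infDist x s ≤ infDist x (thickening ε s)ᶜ := by
      refine (le_infDist hc).2 fun w hw => ?_
      rw [mem_compl_iff, mem_thickening_iff_infDist_lt hs, not_lt] at hw
      have hlip := infDist_le_infDist_add_dist (x := w) (y := x) (s := s)
      rw [dist_comm] at hlip
      linarith
    simp only [signedInfDist, hxs', infDist_zero_of_mem hxT]
    linarith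
  · simp only [signedInfDist, hxs', infDist_zero_of_mem (mem_compl hxT),
      infDist_thickening_of_notMem hs hε hxT]
    linarith

lemma signedInfDist_add_le_of_add_ball_subset {d : E} (hs : s.Nonempty) (hsc : sᶜ.Nonempty)
    (hε : 0 < ε) (h : s + ball d ε ⊆ s) (x : E) :
    signedInfDist s x + ε ≤ signedInfDist s (x + d) := by
  rw [add_ball] at h
  have hc : (thickening ε s)ᶜ.Nonempty := by
    have := hsc.mono (compl_subset_compl.2 h)
    rwa [← vadd_set_compl, vadd_set_nonempty] at this
  calc signedInfDist s x + ε ≤ signedInfDist (thickening ε s) x :=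
        signedInfDist_add_le_thickening hs hc hε x
    _ = signedInfDist (d +ᵥ thickening ε s) (d +ᵥ x) := (signedInfDist_vadd d _ x).symm
    _ ≤ signedInfDist s (d +ᵥ x) :=
        signedInfDist_mono h (hs.mono (self_subset_thickening hε s)).vadd_set hsc _
    _ = signedInfDist s (x + d) := by rw [vadd_eq_add, add_comm]

lemma signedInfDist_lt_add_of_mem_interior {d : E} (hadd : s + s ⊆ s) (hsc : sᶜ.Nonempty)
    (hd : d ∈ interior s) (x : E) : signedInfDist s x < signedInfDist s (x + d) := by
  obtain ⟨ε, hε, hball⟩ := Metric.mem_nhds_iff.1 (mem_interior_iff_mem_nhds.1 hd)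
  have := signedInfDist_add_le_of_add_ball_subset ⟨d, interior_subset hd⟩ hsc hε
    ((add_subset_add_left hball).trans hadd) x
  linarith

end NormedSpace

end Metric

end

theorem stmt_4_general (p t : ℕ)
    (x : Fin t → EuclideanSpace ℝ (Fin p)) (xk : EuclideanSpace ℝ (Fin p))
    (E : Set (EuclideanSpace ℝ (Fin p)))
    (hE : E = {z | ∃ (lam : Fin t → ℝ) (r : EuclideanSpace ℝ (Fin p)),
        (∀ j, 0 ≤ lam j) ∧ (∀ i, 0 ≤ r i) ∧ z = (∑ j, lam j • (x j - xk)) + r})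
    (hEne : E ≠ Set.univ)
    (ψ : EuclideanSpace ℝ (Fin p) → ℝ)
    (hψ : ∀ z, ψ z = Metric.infDist (z - xk) Eᶜ - Metric.infDist (z - xk) E) :
    ∀ a b : EuclideanSpace ℝ (Fin p), b - a ∈ interior E → ψ a < ψ b := by
  have hadd : E + E ⊆ E := by
    subst hE
    rintro _ ⟨_, ⟨l₁, r₁, hl₁, hr₁, rfl⟩, _,
      ⟨l₂, r₂, hl₂, hr₂, rfl⟩, rfl⟩
    refine ⟨l₁ + l₂, r₁ + r₂, fun j => add_nonneg (hl₁ j) (hl₂ j),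
      fun i => add_nonneg (hr₁ i) (hr₂ i), ?_⟩
    simp only [Pi.add_apply, add_smul, Finset.sum_add_distrib]
    abel
  intro a b hab
  have key := signedInfDist_lt_add_of_mem_interior hadd (nonempty_compl.2 hEne) hab (a - xk)
  rw [sub_add_sub_cancel'] at key
  rw [hψ, hψ]
  exact key

/-- ψ is strictly increasing with respect to the interior of E. -/
theorem stmt_4 (p t : ℕ) (hp : 1 ≤ p) (ht : 1 ≤ t)
    (x : Fin t → EuclideanSpace ℝ (Fin p)) (xk : EuclideanSpace ℝ (Fin p))
    (E : Set (EuclideanSpace ℝ (Fin p)))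
    (hE : E = {z | ∃ (lam : Fin t → ℝ) (r : EuclideanSpace ℝ (Fin p)),
        (∀ j, 0 ≤ lam j) ∧ (∀ i, 0 ≤ r i) ∧ z = (∑ j, lam j • (x j - xk)) + r})
    (hEne : E ≠ Set.univ)
    (ψ : EuclideanSpace ℝ (Fin p) → ℝ)
    (hψ : ∀ z, ψ z = Metric.infDist (z - xk) Eᶜ - Metric.infDist (z - xk) E) :
    ∀ a b : EuclideanSpace ℝ (Fin p), b - a ∈ interior E → ψ a < ψ b :=
  stmt_4_general p t x xk E hE hEne ψ hψ
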